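/- Let n ≥ 1 be an integer and β ≥ 0 a real number. Let μ be the mean-field Ising measure on Ω = {±1}ⁿ: μ(σ) = exp(β·M(σ)²/(2n))/Z where M(σ) = Σᵢ σᵢ and Z = Σ_{σ∈Ω} exp(β·M(σ)²/(2n)). For σ ∈ Ω and i ∈ [n], let σ^{⊕i} be σ with the i-th spin flipped, and define the single-site Glauber capacity c(σ, σ^{⊕i}) = (1/n)·μ(σ)·μ(σ^{⊕i})/(μ(σ) + μ(σ^{⊕i})). Define the projected measure μ̄(m) = Σ_{σ : M(σ) = m} μ(σ) and the projected capacity c̄(m, m+2) = Σ_{σ : M(σ) = m} Σ_{i : σᵢ = −1} c(σ, σ^{⊕i}). Then for every m with −n ≤ m ≤ n − 2 and m ≡ n (mod 2), c̄(m, m+2) ≥ (1/(2n))·min(μ̄(m), μ̄(m+2)). -/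

import Mathlib

open Finset

noncomputable section

/-- Total magnetization of a spin configuration (`true` ↦ `+1`, `false` ↦ `−1`). -/
def mag (n : ℕ) (σ : Fin n → Bool) : ℤ := ∑ i, (if σ i then 1 else -1)

/-- The configuration `σ` with the `i`-th spin flipped. -/
def flipSpin (n : ℕ) (σ : Fin n → Bool) (i : Fin n) : Fin n → Bool :=
  Function.update σ i (!σ i)

/-- The mean-field Ising measure `μ_β(σ) = exp(β·M(σ)²/(2n)) / Z` on `{±1}ⁿ`. -/
def isingMu (n : ℕ) (β : ℝ) (σ : Fin n → Bool) : ℝ :=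
  Real.exp (β * (mag n σ : ℝ) ^ 2 / (2 * n)) /
    ∑ τ : Fin n → Bool, Real.exp (β * (mag n τ : ℝ) ^ 2 / (2 * n))

/-- The single-site Glauber capacity
`c(σ, σ^{⊕i}) = (1/n)·μ(σ)·μ(σ^{⊕i})/(μ(σ) + μ(σ^{⊕i}))`. -/
def glauberCap (n : ℕ) (β : ℝ) (σ : Fin n → Bool) (i : Fin n) : ℝ :=
  (1 / n) * (isingMu n β σ * isingMu n β (flipSpin n σ i)) /
    (isingMu n β σ + isingMu n β (flipSpin n σ i))

/-- The projected measure `μ̄(m) = Σ_{σ : M(σ) = m} μ(σ)`. -/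
def projMu (n : ℕ) (β : ℝ) (m : ℤ) : ℝ :=
  ∑ σ ∈ univ.filter (fun σ : Fin n → Bool => mag n σ = m), isingMu n β σ

/-- The projected capacity `c̄(m, m+2) = Σ_{σ : M(σ)=m} Σ_{i : σᵢ=−1} c(σ, σ^{⊕i})`. -/
def projCap (n : ℕ) (β : ℝ) (m : ℤ) : ℝ :=
  ∑ σ ∈ univ.filter (fun σ : Fin n → Bool => mag n σ = m),
    ∑ i ∈ univ.filter (fun i : Fin n => σ i = false), glauberCap n β σ i

end

/-! All configurations of magnetization `m` have the same weight `a`, those of magnetization `m + 2`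
the same weight `b`, so every edge `(σ, σ^{⊕i})` from level `m` to level `m + 2` has the same
capacity `c = ab / (n (a + b))`, which is at least `min a b / (2n)`. Hence `c̄(m, m+2) = E c` with
`E` the number of these edges. Every configuration at level `m < n` has a `−1` spin and every one
at level `m + 2 > −n` a `+1` spin, so `E` bounds both level sizes `N_m`, `N_{m+2}`, and
`min (N_m a) (N_{m+2} b) ≤ E min a b`. -/

noncomputable def isingWeight (n : ℕ) (β : ℝ) (t : ℤ) : ℝ :=
  Real.exp (β * (t : ℝ) ^ 2 / (2 * n)) /
    ∑ τ : Fin n → Bool, Real.exp (β * (mag n τ : ℝ) ^ 2 / (2 * n))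

def magLevel (n : ℕ) (m : ℤ) : Finset (Fin n → Bool) :=
  univ.filter fun σ => mag n σ = m

noncomputable def edgeCap (n : ℕ) (β : ℝ) (m : ℤ) : ℝ :=
  (1 / n) * (isingWeight n β m * isingWeight n β (m + 2)) /
    (isingWeight n β m + isingWeight n β (m + 2))

lemma min_div_two_le_mul_div_add {a b : ℝ} (ha : 0 < a) (hb : 0 < b) :
    min a b / 2 ≤ a * b / (a + b) := by
  rw [div_le_div_iff₀ two_pos (add_pos ha hb)]
  rcases le_total a b with h | h
  · rw [min_eq_left h]; nlinarith
  · rw [min_eq_right h]; nlinarith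

lemma min_mul_le_mul_min {a b x y z : ℝ} (ha : 0 ≤ a) (hb : 0 ≤ b) (hx : x ≤ z) (hy : y ≤ z) :
    min (x * a) (y * b) ≤ z * min a b := by
  rcases le_total a b with h | h
  · rw [min_eq_left h]
    exact (min_le_left _ _).trans (mul_le_mul_of_nonneg_right hx ha)
  · rw [min_eq_right h]
    exact (min_le_right _ _).trans (mul_le_mul_of_nonneg_right hy hb)

section Spins

variable {n : ℕ}

lemma mag_eq_card_sub_card (σ : Fin n → Bool) :
    mag n σ = #{i | σ i = true} - #{i | σ i = false} := by
  simp [mag, sum_ite, sub_eq_add_neg]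

lemma mag_flipSpin (σ : Fin n → Bool) (i : Fin n) :
    mag n (flipSpin n σ i) = mag n σ - 2 * (if σ i then 1 else -1) := by
  unfold mag flipSpin
  simp_rw [Function.apply_update (fun _ b => if b = true then (1 : ℤ) else -1)]
  rw [sum_update_of_mem (mem_univ i), ← add_sum_erase _ _ (mem_univ i)]
  cases σ i <;> simp [sdiff_singleton_eq_erase] <;> ring

lemma mag_flipSpin_of_false {σ : Fin n → Bool} {i : Fin n} (h : σ i = false) :
    mag n (flipSpin n σ i) = mag n σ + 2 := by
  rw [mag_flipSpin, h]; simp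

lemma mag_flipSpin_of_true {σ : Fin n → Bool} {i : Fin n} (h : σ i = true) :
    mag n (flipSpin n σ i) = mag n σ - 2 := by
  rw [mag_flipSpin, h]; simp

@[simp]
lemma flipSpin_self (σ : Fin n → Bool) (i : Fin n) : flipSpin n σ i i = !σ i := by
  simp [flipSpin]

@[simp]
lemma flipSpin_flipSpin (σ : Fin n → Bool) (i : Fin n) :
    flipSpin n (flipSpin n σ i) i = σ := by
  simp [flipSpin]

lemma card_true_add_card_false (σ : Fin n → Bool) :
    #{i | σ i = true} + #{i | σ i = false} = n := by
  simpa using card_filter_add_card_filter_not (s := univ) (fun i : Fin n => σ i = true)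

lemma card_false_pos_of_mag_lt {σ : Fin n → Bool} (h : mag n σ < n) :
    0 < #{i | σ i = false} := by
  have := card_true_add_card_false σ
  rw [mag_eq_card_sub_card] at h
  omega

lemma card_true_pos_of_neg_lt_mag {σ : Fin n → Bool} (h : -(n : ℤ) < mag n σ) :
    0 < #{i | σ i = true} := by
  have := card_true_add_card_false σ
  rw [mag_eq_card_sub_card] at h
  omega

-- Both sides count the edges between the two levels, matched by flipping the spin.
lemma sum_card_false_eq_sum_card_true (m : ℤ) :
    ∑ σ ∈ magLevel n m, #{i | σ i = false} = ∑ τ ∈ magLevel n (m + 2), #{j | τ j = true} := by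
  simp only [← card_sigma]
  refine card_bij' (fun p _ => ⟨flipSpin n p.1 p.2, p.2⟩) (fun p _ => ⟨flipSpin n p.1 p.2, p.2⟩)
    ?_ ?_ (by simp) (by simp)
  · rintro ⟨σ, i⟩ hp
    simp only [magLevel, mem_sigma, mem_filter, mem_univ, true_and] at hp ⊢
    simp [mag_flipSpin_of_false hp.2, hp.1, hp.2]
  · rintro ⟨τ, j⟩ hp
    simp only [magLevel, mem_sigma, mem_filter, mem_univ, true_and] at hp ⊢
    simp [mag_flipSpin_of_true hp.2, hp.1, hp.2]

lemma card_le_sum_card_false {m : ℤ} (hm : m < n) :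
    #(magLevel n m) ≤ ∑ σ ∈ magLevel n m, #{i | σ i = false} := by
  rw [card_eq_sum_ones]
  refine sum_le_sum fun σ hσ => card_false_pos_of_mag_lt ?_
  rw [(mem_filter.mp hσ).2]; exact hm

lemma card_le_sum_card_true {m : ℤ} (hm : -(n : ℤ) < m) :
    #(magLevel n m) ≤ ∑ σ ∈ magLevel n m, #{i | σ i = true} := by
  rw [card_eq_sum_ones]
  refine sum_le_sum fun σ hσ => card_true_pos_of_neg_lt_mag ?_
  rw [(mem_filter.mp hσ).2]; exact hm

end Spins

section Measure
variable {n : ℕ} {β : ℝ}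

lemma isingMu_eq_isingWeight (σ : Fin n → Bool) :
    isingMu n β σ = isingWeight n β (mag n σ) :=
  rfl

lemma isingWeight_pos (t : ℤ) : 0 < isingWeight n β t :=
  div_pos (Real.exp_pos _) (sum_pos (fun _ _ => Real.exp_pos _) univ_nonempty)

lemma projMu_eq_card_mul (m : ℤ) : projMu n β m = #(magLevel n m) * isingWeight n β m := by
  rw [projMu, ← nsmul_eq_mul, ← sum_const]
  refine sum_congr rfl fun σ hσ => ?_
  rw [isingMu_eq_isingWeight, (mem_filter.mp hσ).2]

lemma glauberCap_eq_edgeCap {σ : Fin n → Bool} {i : Fin n} (hi : σ i = false) :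
    glauberCap n β σ i = edgeCap n β (mag n σ) := by
  rw [glauberCap, edgeCap, isingMu_eq_isingWeight, isingMu_eq_isingWeight,
    mag_flipSpin_of_false hi]

lemma projCap_eq_sum_mul (m : ℤ) :
    projCap n β m = (∑ σ ∈ magLevel n m, #{i | σ i = false}) * edgeCap n β m := by
  rw [projCap, Nat.cast_sum, sum_mul]
  refine sum_congr rfl fun σ hσ => ?_
  rw [← nsmul_eq_mul, ← sum_const]
  refine sum_congr rfl fun i hi => ?_
  rw [glauberCap_eq_edgeCap (mem_filter.mp hi).2, (mem_filter.mp hσ).2]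

lemma min_div_le_edgeCap (m : ℤ) :
    1 / (2 * n) * min (isingWeight n β m) (isingWeight n β (m + 2)) ≤ edgeCap n β m := by
  calc 1 / (2 * n) * min (isingWeight n β m) (isingWeight n β (m + 2))
      = 1 / n * (min (isingWeight n β m) (isingWeight n β (m + 2)) / 2) := by ring
    _ ≤ 1 / n * (isingWeight n β m * isingWeight n β (m + 2) /
          (isingWeight n β m + isingWeight n β (m + 2))) := by
      gcongr _ * ?_
      exact min_div_two_le_mul_div_add (isingWeight_pos m) (isingWeight_pos (m + 2))
    _ = edgeCap n β m := by rw [edgeCap]; ring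

end Measure

theorem projected_capacity_lower_bound_general (n : ℕ) (β : ℝ)
    (m : ℤ) (h1 : -(n : ℤ) ≤ m) (h2 : m ≤ (n : ℤ) - 2) :
    (1 / (2 * n)) * min (projMu n β m) (projMu n β (m + 2)) ≤ projCap n β m := by
  have hlow : #(magLevel n m) ≤ ∑ σ ∈ magLevel n m, #{i | σ i = false} :=
    card_le_sum_card_false (by omega)
  have hup : #(magLevel n (m + 2)) ≤ ∑ σ ∈ magLevel n m, #{i | σ i = false} :=
    sum_card_false_eq_sum_card_true m ▸ card_le_sum_card_true (by omega)
  set E := ∑ σ ∈ magLevel n m, #{i | σ i = false}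
  set a := isingWeight n β m
  set b := isingWeight n β (m + 2)
  rw [projMu_eq_card_mul, projMu_eq_card_mul, projCap_eq_sum_mul]
  calc 1 / (2 * n) * min (#(magLevel n m) * a) (#(magLevel n (m + 2)) * b)
      ≤ 1 / (2 * n) * (E * min a b) := by
        gcongr
        exact min_mul_le_mul_min (isingWeight_pos m).le (isingWeight_pos (m + 2)).le
          (by exact_mod_cast hlow) (by exact_mod_cast hup)
    _ = E * (1 / (2 * n) * min a b) := by ring
    _ ≤ E * edgeCap n β m := by gcongr; exact min_div_le_edgeCap m

/-- Capacity lower bound for the projected chain of the mean-field Ising model: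
`c̄(m, m+2) ≥ (1/(2n))·min(μ̄(m), μ̄(m+2))`. -/
theorem projected_capacity_lower_bound (n : ℕ) (hn : 1 ≤ n) (β : ℝ) (hβ : 0 ≤ β)
    (m : ℤ) (h1 : -(n : ℤ) ≤ m) (h2 : m ≤ (n : ℤ) - 2) (h3 : m % 2 = (n : ℤ) % 2) :
    (1 / (2 * n)) * min (projMu n β m) (projMu n β (m + 2)) ≤ projCap n β m :=
  projected_capacity_lower_bound_general n β m h1 h2
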